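/- If a chord c in a signed oriented chord diagram is odd, then the integer N(c) assigned to it is even, where N(c) = x − y if w(c) = +1 and N(c) = z − w if w(c) = −1, with x, y (resp. z, w) being the arc labels just before and after the relevant endpoints of c as in the definition of the odd writhe polynomial. -/

import Mathlib

open Finset LaurentPolynomial

/-- A signed, oriented chord diagram (combinatorial Gauss diagram) with `n` chords:
the `2*n` chord endpoints on the circle are the elements of `Fin (2*n)` in (positive)
cyclic order; chord `i` has over endpoint `c⁺ = ep (i, true)`, under endpoint
`c⁻ = ep (i, false)` and a sign (writhe) `sign i ∈ {1, -1}`. -/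
structure ChordDiagram (n : ℕ) where
  ep : Fin n × Bool ≃ Fin (2 * n)
  sign : Fin n → ℤ
  sign_unit : ∀ i, sign i = 1 ∨ sign i = -1

namespace ChordDiagram

variable {n : ℕ}

/-- the over endpoint `c⁺` of a chord -/
def over' (D : ChordDiagram n) (i : Fin n) : Fin (2 * n) := D.ep (i, true)

/-- the under endpoint `c⁻` of a chord -/
def under (D : ChordDiagram n) (i : Fin n) : Fin (2 * n) := D.ep (i, false)

/-- the number of steps from `b` to `x`, travelling in the positive direction
around the circle -/
def relpos (b x : Fin (2 * n)) : ℕ := (x.val + 2 * n - b.val) % (2 * n)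

/-- `x` lies strictly between the endpoints of chord `i`, on the side swept out
going from `c⁺` to `c⁻` in the positive direction -/
def StrictlyBetween (D : ChordDiagram n) (i : Fin n) (x : Fin (2 * n)) : Prop :=
  0 < relpos (D.over' i) x ∧ relpos (D.over' i) x < relpos (D.over' i) (D.under i)

instance (D : ChordDiagram n) (i : Fin n) (x : Fin (2 * n)) :
    Decidable (D.StrictlyBetween i x) := inferInstanceAs (Decidable (_ ∧ _))

/-- two distinct chords interlink if their endpoints alternate around the circle,
i.e. exactly one endpoint of `j` lies strictly between the endpoints of `i` -/
def Interlinks (D : ChordDiagram n) (i j : Fin n) : Prop :=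
  i ≠ j ∧ Xor (D.StrictlyBetween i (D.over' j)) (D.StrictlyBetween i (D.under j))

instance (D : ChordDiagram n) (i j : Fin n) : Decidable (D.Interlinks i j) :=
  inferInstanceAs (Decidable (_ ∧ _))

/-- the number of chords interlinking chord `i` -/
def interlinkCount (D : ChordDiagram n) (i : Fin n) : ℕ :=
  (univ.filter fun j => D.Interlinks i j).card

/-- the number of chord endpoints lying (strictly) on one side of chord `i` -/
def sideCount (D : ChordDiagram n) (i : Fin n) : ℕ :=
  (univ.filter fun x => D.StrictlyBetween i x).card

/-- a chord is odd if it interlinks an odd number of other chords -/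
def OddChord (D : ChordDiagram n) (i : Fin n) : Prop := Odd (D.interlinkCount i)

instance (D : ChordDiagram n) (i : Fin n) : Decidable (D.OddChord i) :=
  inferInstanceAs (Decidable (Odd _))

/-- The label `N(a)` of the arc whose terminal point is `a`: the sum of the signs of
all chords whose over endpoint is met strictly before their under endpoint when
traversing the circle once in the positive direction starting inside this arc. -/
def arcLabel (D : ChordDiagram n) (a : Fin (2 * n)) : ℤ :=
  ∑ i ∈ univ.filter fun i => relpos a (D.over' i) < relpos a (D.under i), D.sign i

/-- The value `N(c)` of a chord: for a positive chord, the difference `x - y` of the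
arc labels just before `c⁺` and just before `c⁻`; for a negative chord, the difference
`z - w` of the arc labels just after `c⁺` and just after `c⁻` (the label just after an
over endpoint is the label just before it minus the sign, and the label just after an
under endpoint is the label just before it plus the sign). -/
def chordVal (D : ChordDiagram n) (i : Fin n) : ℤ :=
  if D.sign i = 1 then D.arcLabel (D.over' i) - D.arcLabel (D.under i)
  else (D.arcLabel (D.over' i) - D.sign i) - (D.arcLabel (D.under i) + D.sign i)

/-- the odd writhe `J(K) = Σ_{c odd} w(c)` -/
def oddWrithe (D : ChordDiagram n) : ℤ :=
  ∑ i ∈ univ.filter fun i => D.OddChord i, D.sign i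

/-- the odd writhe polynomial `f_K(t) = Σ_{c odd} w(c) · t^{N(c)} ∈ ℤ[t,t⁻¹]` -/
noncomputable def owp (D : ChordDiagram n) : LaurentPolynomial ℤ :=
  ∑ i ∈ univ.filter fun i => D.OddChord i, C (D.sign i) * T (D.chordVal i)

/-- evaluation of the odd writhe polynomial at a rational number `x`:
`Σ_{c odd} w(c) · x^{N(c)}` -/
def owpEval (D : ChordDiagram n) (x : ℚ) : ℚ :=
  ∑ i ∈ univ.filter fun i => D.OddChord i, (D.sign i : ℚ) * x ^ D.chordVal i

/-- the coefficient of `t^k` in a Laurent polynomial -/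
def coeffOf (f : LaurentPolynomial ℤ) (k : ℤ) : ℤ := f.coeff k

/-- the degree `Deg f = max { |i| : coefficient of tⁱ in f is nonzero }` -/
def owpDeg (f : LaurentPolynomial ℤ) : ℕ := f.coeff.support.sup fun k => k.natAbs

/-- reversing the orientation of the knot: the cyclic order of the endpoints is
reversed, while signs and over/under data of the crossings are preserved -/
def reverse (D : ChordDiagram n) : ChordDiagram n where
  ep := D.ep.trans Fin.revPerm
  sign := D.sign
  sign_unit := D.sign_unit

/-- the mirror image: every crossing is switched, so every chord's over and under
endpoints are exchanged and its sign is negated -/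
def mirror (D : ChordDiagram n) : ChordDiagram n where
  ep := (Equiv.prodCongr (Equiv.refl (Fin n))
      ⟨fun b => !b, fun b => !b, Bool.not_not, Bool.not_not⟩).trans D.ep
  sign := fun i => -D.sign i
  sign_unit := fun i => (D.sign_unit i).elim
    (fun h => Or.inr (show -D.sign i = -1 by rw [h]))
    (fun h => Or.inl (show -D.sign i = 1 by rw [h]; ring))

/-! ### Planarity via the Euler characteristic of the carrier surface

The diagram determines a 4-valent graph (vertices = chords, edges = the `2*n` arcs of
the circle) together with a rotation system at each vertex, coming from the structure
of a transversal crossing: for a positive crossing the counterclockwise order of the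
four ends is (over-out, under-out, over-in, under-in), for a negative crossing it is
(over-out, under-in, over-in, under-out).  The diagram is realizable by a classical
(planar) knot diagram iff the resulting closed oriented carrier surface is a sphere,
i.e. iff `V - E + F = n - 2n + F = 2`.

Darts are encoded as pairs `(p, io) : Fin (2*n) × Bool`, meaning the end of an arc
at the vertex through the circle point `p`, with `io = true` for the outgoing arc
(from `p` to `p+1`) and `io = false` for the incoming arc (from `p-1` to `p`). -/

/-- the other endpoint of the chord through a given endpoint -/
def otherEnd (D : ChordDiagram n) (p : Fin (2 * n)) : Fin (2 * n) :=
  D.ep ((D.ep.symm p).1, !(D.ep.symm p).2)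

lemma otherEnd_otherEnd (D : ChordDiagram n) (p : Fin (2 * n)) :
    D.otherEnd (D.otherEnd p) = p := by
  simp [otherEnd]

/-- whether the rotation at the vertex toggles the in/out marker when passing from
the end at `p` to the end at the other endpoint of its chord -/
def tog (D : ChordDiagram n) (p : Fin (2 * n)) : Bool :=
  if D.sign (D.ep.symm p).1 = 1 then !(D.ep.symm p).2 else (D.ep.symm p).2

/-- the vertex rotation permutation on darts -/
def vertexPerm (D : ChordDiagram n) : Equiv.Perm (Fin (2 * n) × Bool) :=
  Equiv.trans
    ⟨fun x => (x.1, xor x.2 (D.tog x.1)), fun x => (x.1, xor x.2 (D.tog x.1)),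
      fun x => by simp [Bool.xor_assoc], fun x => by simp [Bool.xor_assoc]⟩
    ⟨fun x => (D.otherEnd x.1, x.2), fun x => (D.otherEnd x.1, x.2),
      fun x => by simp [otherEnd_otherEnd], fun x => by simp [otherEnd_otherEnd]⟩

/-- the edge involution on darts, matching the two ends of each arc -/
def arcPerm (D : ChordDiagram n) : Equiv.Perm (Fin (2 * n) × Bool) :=
  ⟨fun x => if x.2 then (finRotate (2 * n) x.1, false) else ((finRotate (2 * n)).symm x.1, true),
   fun x => if x.2 then (finRotate (2 * n) x.1, false) else ((finRotate (2 * n)).symm x.1, true),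
   fun x => by rcases x with ⟨p, _ | _⟩ <;> simp [-finRotate_apply, -finRotate_symm_apply],
   fun x => by rcases x with ⟨p, _ | _⟩ <;> simp [-finRotate_apply, -finRotate_symm_apply]⟩

/-- the face permutation on darts -/
def facePerm (D : ChordDiagram n) : Equiv.Perm (Fin (2 * n) × Bool) :=
  (D.arcPerm).trans D.vertexPerm

/-- the number of faces: the number of orbits of the face permutation -/
noncomputable def faceCount (D : ChordDiagram n) : ℕ :=
  Nat.card (MulAction.orbitRel.Quotient (Subgroup.zpowers D.facePerm) (Fin (2 * n) × Bool))

/-- the chord diagram arises from a classical (planar) knot diagram: the carrier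
surface has Euler characteristic `V - E + F = n - 2n + faceCount = 2` -/
def PlanarRealizable (D : ChordDiagram n) : Prop := D.faceCount = n + 2

end ChordDiagram


open ChordDiagram

/-! The label of the arc ending at `a` is a sum of signs `±1` over the set `S(a)` of chords whose
over endpoint comes first when reading from `a`, so it has the parity of `#S(a)`. Moving the base
point from `c⁺` to `c⁻` changes membership in `S` exactly for `c` itself and for the chords
interlinking `c`, so `#S(c⁺) + #S(c⁻)` has the parity of `interlinkCount c + 1`, which is even for
an odd chord. Thus the labels at `c⁺` and `c⁻` have the same parity; for a negative chord `N(c)`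
differs from their difference by `-2 w(c)`. -/

open scoped symmDiff

namespace Finset

variable {ι : Type*}

theorem even_sum_int_iff_even_card {s : Finset ι} {f : ι → ℤ} (hf : ∀ j ∈ s, Odd (f j)) :
    Even (∑ j ∈ s, f j) ↔ Even #s := by
  rw [Int.even_iff, sum_int_mod, sum_congr rfl fun j hj => Int.odd_iff.mp (hf j hj),
    ← Int.even_iff, sum_const, nsmul_one, Int.even_coe_nat]

theorem card_symmDiff_add_two_mul_card_inter [DecidableEq ι] (s t : Finset ι) :
    #(s ∆ t) + 2 * #(s ∩ t) = #s + #t := by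
  rw [symmDiff_def, sup_eq_union, card_union_of_disjoint disjoint_sdiff_sdiff]
  have := card_sdiff_add_card_inter s t
  have := card_sdiff_add_card_inter t s
  rw [inter_comm t s] at this
  omega

theorem even_card_symmDiff_iff [DecidableEq ι] (s t : Finset ι) :
    Even #(s ∆ t) ↔ Even (#s + #t) := by
  rw [← card_symmDiff_add_two_mul_card_inter]
  simp [Nat.even_add]

end Finset

namespace ChordDiagram

variable {n : ℕ}

theorem relpos_self (a : Fin (2 * n)) : relpos a a = 0 := by
  simp [relpos]

theorem relpos_cases (a x : Fin (2 * n)) :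
    (x.val < a.val ∧ relpos a x = x.val + 2 * n - a.val) ∨
      (a.val ≤ x.val ∧ relpos a x = x.val - a.val) := by
  have hx := x.isLt
  unfold relpos
  rcases Nat.lt_or_ge x.val a.val with h | h
  · exact Or.inl ⟨h, Nat.mod_eq_of_lt (by omega)⟩
  · refine Or.inr ⟨h, ?_⟩
    rw [show x.val + 2 * n - a.val = x.val - a.val + 2 * n * 1 by omega,
      Nat.add_mul_mod_self_left]
    exact Nat.mod_eq_of_lt (by omega)

theorem relpos_pos {a x : Fin (2 * n)} (h : a ≠ x) : 0 < relpos a x := by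
  have := Fin.val_ne_of_ne h
  rcases relpos_cases a x with h | h <;> omega

/-- Moving the base point from `a` to `b` swaps the order of `x` and `y` iff exactly one of
them lies on the arc from `a` to `b`. -/
theorem xor_relpos_lt_iff {a b x y : Fin (2 * n)} (hbx : b ≠ x) (hby : b ≠ y) :
    Xor (relpos a x < relpos a y) (relpos b x < relpos b y) ↔
      Xor (relpos a x < relpos a b) (relpos a y < relpos a b) := by
  have := Fin.val_ne_of_ne hbx
  have := Fin.val_ne_of_ne hby
  have := x.isLt
  have := y.isLt
  have := b.isLt
  rcases relpos_cases a x with hx | hx <;> rcases relpos_cases a y with hy | hy <;>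
    rcases relpos_cases a b with hb | hb <;> rcases relpos_cases b x with hx' | hx' <;>
    rcases relpos_cases b y with hy' | hy' <;>
    simp only [Xor, hx, hy, hb, hx', hy'] <;> omega

theorem over'_ne_under (D : ChordDiagram n) (i j : Fin n) : D.over' i ≠ D.under j := fun h => by
  simpa using D.ep.injective h

theorem over'_ne_over' (D : ChordDiagram n) {i j : Fin n} (h : i ≠ j) : D.over' i ≠ D.over' j :=
  fun h' => h (congrArg Prod.fst (D.ep.injective h'))

theorem under_ne_under (D : ChordDiagram n) {i j : Fin n} (h : i ≠ j) : D.under i ≠ D.under j :=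
  fun h' => h (congrArg Prod.fst (D.ep.injective h'))

theorem odd_sign (D : ChordDiagram n) (i : Fin n) : Odd (D.sign i) := by
  rcases D.sign_unit i with h | h <;> simp [h]

def overFirst (D : ChordDiagram n) (a : Fin (2 * n)) : Finset (Fin n) :=
  univ.filter fun j => relpos a (D.over' j) < relpos a (D.under j)

theorem arcLabel_eq_sum_overFirst (D : ChordDiagram n) (a : Fin (2 * n)) :
    D.arcLabel a = ∑ j ∈ D.overFirst a, D.sign j := rfl

theorem mem_overFirst (D : ChordDiagram n) {a : Fin (2 * n)} {j : Fin n} :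
    j ∈ D.overFirst a ↔ relpos a (D.over' j) < relpos a (D.under j) := by
  simp [overFirst]

theorem symmDiff_overFirst (D : ChordDiagram n) (i : Fin n) :
    D.overFirst (D.over' i) ∆ D.overFirst (D.under i) =
      insert i (univ.filter fun j => D.Interlinks i j) := by
  ext j
  rw [mem_insert, mem_filter, mem_symmDiff, ← xor_def, mem_overFirst, mem_overFirst]
  rcases eq_or_ne i j with rfl | hij
  · simp only [relpos_self, true_or, iff_true]
    exact Or.inl
      ⟨relpos_pos (D.over'_ne_under i i), (relpos_pos (D.over'_ne_under i i).symm).not_gt⟩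
  · simp only [hij.symm, hij, false_or, mem_univ, true_and, Interlinks, ne_eq, not_false_eq_true]
    rw [xor_relpos_lt_iff (D.over'_ne_under j i).symm (D.under_ne_under hij)]
    simp only [StrictlyBetween, relpos_pos (D.over'_ne_over' hij),
      relpos_pos (D.over'_ne_under i j), true_and]

theorem even_card_add_card_overFirst (D : ChordDiagram n) {i : Fin n} (h : D.OddChord i) :
    Even (#(D.overFirst (D.over' i)) + #(D.overFirst (D.under i))) := by
  rw [← even_card_symmDiff_iff, symmDiff_overFirst,
    card_insert_of_notMem fun hi => (mem_filter.mp hi).2.1 rfl]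
  exact h.add_one

theorem even_arcLabel_sub_arcLabel (D : ChordDiagram n) {i : Fin n} (h : D.OddChord i) :
    Even (D.arcLabel (D.over' i) - D.arcLabel (D.under i)) := by
  simp only [Int.even_sub, arcLabel_eq_sum_overFirst,
    even_sum_int_iff_even_card fun j _ => D.odd_sign j]
  exact Nat.even_add.mp (D.even_card_add_card_overFirst h)

theorem even_chordVal_iff (D : ChordDiagram n) (i : Fin n) :
    Even (D.chordVal i) ↔ Even (D.arcLabel (D.over' i) - D.arcLabel (D.under i)) := by
  unfold chordVal
  split_ifs
  · rfl
  · rw [show ∀ x y s : ℤ, x - s - (y + s) = x - y - 2 * s by intros; ring, Int.even_sub]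
    simp

end ChordDiagram

/-- if a chord is odd then the integer `N(c)` assigned to it is even. -/
theorem stmt_4 {n : ℕ} (D : ChordDiagram n) (i : Fin n) (h : D.OddChord i) :
    Even (D.chordVal i) :=
  (D.even_chordVal_iff i).mpr (D.even_arcLabel_sub_arcLabel h)
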